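/- arXiv:1812.02746 — 5 statements merged into one kernel-verified Lean document; each statement's English description precedes it below -/
import Mathlib

section
/- Let ι be a finite nonempty index type, let ψ₀ and ψ⋆ be unit vectors in EuclideanSpace ℂ ι, let U be a unitary operator on EuclideanSpace ℂ ι, let γ : ℝ and s : ι → ℝ, and let Sψ₀ be the vector with components (Sψ₀) w = exp(-I·γ·s w) · (ψ₀ w). Then | ‖⟪ψ⋆, U ψ₀⟫‖ - ‖⟪ψ⋆, U (Sψ₀)⟫‖ | ≤ Real.sqrt (∑ w, 4 · ‖ψ₀ w‖² · (Real.sin (γ · s w / 2))²). -/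
open scoped InnerProductSpace BigOperators

/-!
Since `‖ψ⋆‖ = 1` and `U` is an isometry, the overlap `ψ ↦ ‖⟪ψ⋆, U ψ⟫‖` is 1-Lipschitz, so the
change is at most `‖ψ₀ - Sψ₀‖`. The phase moves coordinate `w` by
`|1 - e^{-iγ s(w)}| |ψ₀ w| = 2 |sin (γ s(w) / 2)| |ψ₀ w|`.
-/

theorem abs_norm_inner_sub_norm_inner_le {𝕜 E : Type*} [RCLike 𝕜] [SeminormedAddCommGroup E]
    [InnerProductSpace 𝕜 E] (x u v : E) :
    |‖⟪x, u⟫_𝕜‖ - ‖⟪x, v⟫_𝕜‖| ≤ ‖x‖ * ‖u - v‖ :=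
  calc |‖⟪x, u⟫_𝕜‖ - ‖⟪x, v⟫_𝕜‖| ≤ ‖⟪x, u⟫_𝕜 - ⟪x, v⟫_𝕜‖ := abs_norm_sub_norm_le _ _
    _ = ‖⟪x, u - v⟫_𝕜‖ := by rw [inner_sub_right]
    _ ≤ ‖x‖ * ‖u - v‖ := norm_inner_le_norm _ _

theorem Complex.norm_one_sub_exp_neg_I_mul_ofReal_sq (θ : ℝ) :
    ‖1 - Complex.exp (-Complex.I * θ)‖ ^ 2 = 4 * Real.sin (θ / 2) ^ 2 := by
  have h : -Complex.I * θ = Complex.I * ((-θ : ℝ) : ℂ) := by push_cast; ring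
  rw [norm_sub_rev, h, Complex.norm_exp_I_mul_ofReal_sub_one, neg_div, Real.sin_neg, mul_neg,
    norm_neg, Real.norm_eq_abs, sq_abs]
  ring

theorem EuclideanSpace.norm_sub_eq_sqrt_of_apply_eq_mul {𝕜 ι : Type*} [RCLike 𝕜] [Fintype ι]
    {ψ φ : EuclideanSpace 𝕜 ι} {c : ι → 𝕜} (h : ∀ w, φ w = c w * ψ w) :
    ‖ψ - φ‖ = √(∑ w, ‖1 - c w‖ ^ 2 * ‖ψ w‖ ^ 2) := by
  rw [EuclideanSpace.norm_eq]
  congr 1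
  refine Finset.sum_congr rfl fun w _ => ?_
  rw [PiLp.sub_apply, h, ← one_sub_mul, norm_mul, mul_pow]

theorem phase_perturbation_overlap_bound_general
    {ι : Type*} [Fintype ι]
    (ψ₀ ψstar : EuclideanSpace ℂ ι)
    (hψstar : ‖ψstar‖ = 1)
    (U : EuclideanSpace ℂ ι ≃ₗᵢ[ℂ] EuclideanSpace ℂ ι)
    (γ : ℝ) (s : ι → ℝ)
    (Sψ₀ : EuclideanSpace ℂ ι)
    (hS : ∀ w, Sψ₀ w = Complex.exp (-Complex.I * γ * s w) * ψ₀ w) :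
    |‖⟪ψstar, U ψ₀⟫_ℂ‖ - ‖⟪ψstar, U Sψ₀⟫_ℂ‖|
      ≤ Real.sqrt (∑ w, 4 * ‖ψ₀ w‖ ^ 2 * Real.sin (γ * s w / 2) ^ 2) := by
  have hphase (w : ι) : ‖1 - Complex.exp (-Complex.I * γ * s w)‖ ^ 2 =
      4 * Real.sin (γ * s w / 2) ^ 2 := by
    rw [← Complex.norm_one_sub_exp_neg_I_mul_ofReal_sq, Complex.ofReal_mul, mul_assoc]
  calc |‖⟪ψstar, U ψ₀⟫_ℂ‖ - ‖⟪ψstar, U Sψ₀⟫_ℂ‖| ≤ ‖ψstar‖ * ‖U ψ₀ - U Sψ₀‖ :=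
        abs_norm_inner_sub_norm_inner_le _ _ _
    _ = ‖ψ₀ - Sψ₀‖ := by rw [hψstar, one_mul, ← map_sub, U.norm_map]
    _ = Real.sqrt (∑ w, 4 * ‖ψ₀ w‖ ^ 2 * Real.sin (γ * s w / 2) ^ 2) := by
        rw [EuclideanSpace.norm_sub_eq_sqrt_of_apply_eq_mul hS]
        simp only [hphase, mul_right_comm]

/-- Perturbing the initial state of a protocol by a diagonal phase operator
`e^{-iγ s(w)}` changes the final overlap with any target state by at most the
weak-overlap quantity `√(∑ w, 4 |ψ₀ w|² sin²(γ s(w)/2))`. -/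
theorem phase_perturbation_overlap_bound
    {ι : Type*} [Fintype ι] [Nonempty ι]
    (ψ₀ ψstar : EuclideanSpace ℂ ι)
    (hψ₀ : ‖ψ₀‖ = 1) (hψstar : ‖ψstar‖ = 1)
    (U : EuclideanSpace ℂ ι ≃ₗᵢ[ℂ] EuclideanSpace ℂ ι)
    (γ : ℝ) (s : ι → ℝ)
    (Sψ₀ : EuclideanSpace ℂ ι)
    (hS : ∀ w, Sψ₀ w = Complex.exp (-Complex.I * γ * s w) * ψ₀ w) :
    |‖⟪ψstar, U ψ₀⟫_ℂ‖ - ‖⟪ψstar, U Sψ₀⟫_ℂ‖|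
      ≤ Real.sqrt (∑ w, 4 * ‖ψ₀ w‖ ^ 2 * Real.sin (γ * s w / 2) ^ 2) :=
  phase_perturbation_overlap_bound_general ψ₀ ψstar hψstar U γ s Sψ₀ hS
end

section
/- Let ι be a finite nonempty index type, let ψ₀ and ψ⋆ be unit vectors in EuclideanSpace ℂ ι, let U be a unitary operator on EuclideanSpace ℂ ι, let γ : ℝ and s : ι → ℝ, and let Sψ₀ be the vector with components (Sψ₀) w = exp(-I·γ·s w) · (ψ₀ w). Set p = ‖⟪ψ⋆, U ψ₀⟫‖², p⋆ = ‖⟪ψ⋆, U (Sψ₀)⟫‖², and q = ∑ w, 4 · ‖ψ₀ w‖² · (Real.sin (γ · s w / 2))². If q ≤ p, then p⋆ ≥ (Real.sqrt p - Real.sqrt q)². -/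
/-! The phase operator moves `ψ₀` by exactly `‖Sψ₀ - ψ₀‖ = √q`, and the amplitude
`x ↦ ⟪ψ⋆, U x⟫` is `1`-Lipschitz because `U` is an isometry and `ψ⋆` a unit vector.
Hence `√p⋆ ≥ √p - √q`, and squaring is monotone once `q ≤ p` makes the right side nonnegative. -/

open scoped InnerProductSpace

lemma Complex.norm_exp_neg_I_mul_ofReal_sub_one_sq (θ : ℝ) :
    ‖Complex.exp (-Complex.I * θ) - 1‖ ^ 2 = 4 * Real.sin (θ / 2) ^ 2 := by
  rw [show -Complex.I * θ = Complex.I * ((-θ : ℝ) : ℂ) by push_cast; ring,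
    Complex.norm_exp_I_mul_ofReal_sub_one, Real.norm_eq_abs, sq_abs, neg_div, Real.sin_neg]
  ring

lemma EuclideanSpace.norm_phase_sub_sq {ι : Type*} [Fintype ι] (θ : ι → ℝ)
    (v u : EuclideanSpace ℂ ι) (hu : ∀ w, u w = Complex.exp (-Complex.I * θ w) * v w) :
    ‖u - v‖ ^ 2 = ∑ w, 4 * ‖v w‖ ^ 2 * Real.sin (θ w / 2) ^ 2 := by
  rw [EuclideanSpace.norm_sq_eq]
  refine Finset.sum_congr rfl fun w _ => ?_
  rw [PiLp.sub_apply, hu, ← sub_one_mul, norm_mul, mul_pow,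
    Complex.norm_exp_neg_I_mul_ofReal_sub_one_sq]
  ring

lemma norm_inner_map_sub_norm_inner_map_le {𝕜 E F : Type*} [RCLike 𝕜]
    [NormedAddCommGroup E] [InnerProductSpace 𝕜 E] [NormedAddCommGroup F] [InnerProductSpace 𝕜 F]
    (φ : F) (U : E →ₗᵢ[𝕜] F) (x y : E) :
    ‖⟪φ, U x⟫_𝕜‖ - ‖⟪φ, U y⟫_𝕜‖ ≤ ‖φ‖ * ‖x - y‖ :=
  calc ‖⟪φ, U x⟫_𝕜‖ - ‖⟪φ, U y⟫_𝕜‖ ≤ ‖⟪φ, U x⟫_𝕜 - ⟪φ, U y⟫_𝕜‖ := norm_sub_norm_le _ _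
    _ = ‖⟪φ, U (x - y)⟫_𝕜‖ := by rw [map_sub, inner_sub_right]
    _ ≤ ‖φ‖ * ‖U (x - y)‖ := norm_inner_le_norm _ _
    _ = ‖φ‖ * ‖x - y‖ := by rw [U.norm_map]

theorem phase_perturbation_success_bound_general
    {ι : Type*} [Fintype ι]
    (ψ₀ ψstar : EuclideanSpace ℂ ι)
    (hψstar : ‖ψstar‖ = 1)
    (U : EuclideanSpace ℂ ι ≃ₗᵢ[ℂ] EuclideanSpace ℂ ι)
    (γ : ℝ) (s : ι → ℝ)
    (Sψ₀ : EuclideanSpace ℂ ι)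
    (hS : ∀ w, Sψ₀ w = Complex.exp (-Complex.I * γ * s w) * ψ₀ w)
    (p pstar q : ℝ)
    (hp : p = ‖⟪ψstar, U ψ₀⟫_ℂ‖ ^ 2)
    (hpstar : pstar = ‖⟪ψstar, U Sψ₀⟫_ℂ‖ ^ 2)
    (hq : q = ∑ w, 4 * ‖ψ₀ w‖ ^ 2 * Real.sin (γ * s w / 2) ^ 2)
    (hqp : q ≤ p) :
    pstar ≥ (Real.sqrt p - Real.sqrt q) ^ 2 := by
  have hphase : ∀ w, Sψ₀ w = Complex.exp (-Complex.I * ((γ * s w : ℝ) : ℂ)) * ψ₀ w := by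
    intro w
    rw [hS, Complex.ofReal_mul, mul_assoc]
  have hsqrt_p : Real.sqrt p = ‖⟪ψstar, U ψ₀⟫_ℂ‖ := by
    rw [hp, Real.sqrt_sq (norm_nonneg _)]
  have hsqrt_q : Real.sqrt q = ‖Sψ₀ - ψ₀‖ := by
    rw [hq, ← EuclideanSpace.norm_phase_sub_sq _ ψ₀ Sψ₀ hphase, Real.sqrt_sq (norm_nonneg _)]
  have hlip : ‖⟪ψstar, U ψ₀⟫_ℂ‖ - ‖⟪ψstar, U Sψ₀⟫_ℂ‖ ≤ ‖ψstar‖ * ‖ψ₀ - Sψ₀‖ :=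
    norm_inner_map_sub_norm_inner_map_le ψstar U.toLinearIsometry ψ₀ Sψ₀
  rw [hpstar, ge_iff_le]
  refine pow_le_pow_left₀ (sub_nonneg.mpr (Real.sqrt_le_sqrt hqp)) ?_ 2
  rw [hψstar, one_mul, norm_sub_rev] at hlip
  linarith

/-- Quantitative form of Lemma 1: if the unperturbed protocol succeeds with
probability `p` and the phase perturbation has weak overlap `q ≤ p`, then the
perturbed protocol succeeds with probability at least `(√p − √q)²`. -/
theorem phase_perturbation_success_bound
    {ι : Type*} [Fintype ι] [Nonempty ι]
    (ψ₀ ψstar : EuclideanSpace ℂ ι)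
    (hψ₀ : ‖ψ₀‖ = 1) (hψstar : ‖ψstar‖ = 1)
    (U : EuclideanSpace ℂ ι ≃ₗᵢ[ℂ] EuclideanSpace ℂ ι)
    (γ : ℝ) (s : ι → ℝ)
    (Sψ₀ : EuclideanSpace ℂ ι)
    (hS : ∀ w, Sψ₀ w = Complex.exp (-Complex.I * γ * s w) * ψ₀ w)
    (p pstar q : ℝ)
    (hp : p = ‖⟪ψstar, U ψ₀⟫_ℂ‖ ^ 2)
    (hpstar : pstar = ‖⟪ψstar, U Sψ₀⟫_ℂ‖ ^ 2)
    (hq : q = ∑ w, 4 * ‖ψ₀ w‖ ^ 2 * Real.sin (γ * s w / 2) ^ 2)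
    (hqp : q ≤ p) :
    pstar ≥ (Real.sqrt p - Real.sqrt q) ^ 2 :=
  phase_perturbation_success_bound_general ψ₀ ψstar hψstar U γ s Sψ₀ hS p pstar q hp hpstar hq hqp
end

section
/- Fix n : ℕ and β : ℝ. For i : Fin n, let X_i : Matrix ((Fin n) → Bool) ((Fin n) → Bool) ℂ be the matrix with (X_i) z z' = 1 if z' = Function.update z i (!(z i)) and 0 otherwise, and let B' = ∑ i, X_i. Then for all bitstrings z z' : Fin n → Bool, (Matrix.exp (I·β·B')) z z' = (Real.cos β)^(n - d) · (I · Real.sin β)^d, where d is the Hamming distance between z and z' (the number of indices i with z i ≠ z' i). -/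
/-!
Each `X_i` is the tensor product of the one-qubit flip `σ` at position `i` with identities
elsewhere. Hence `X_i² = 1` and the `X_i` commute, so `e^{θ X_i} = cosh θ + sinh θ X_i` and
`e^{θ ∑ X_i} = ∏ e^{θ X_i}` is the tensor power of the one-qubit rotation `cosh θ + sinh θ σ`,
whose entries are `cosh θ` on the diagonal and `sinh θ` off it. The `(z, z')` entry of the
tensor power is therefore `cosh^(n-d) θ · sinh^d θ`; put `θ = iβ`.
-/

open Matrix Complex

/-- The bit-flip (Pauli X on qubit `i`) matrix on `n`-bit strings. -/
noncomputable def pauliX (n : ℕ) (i : Fin n) :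
    Matrix (Fin n → Bool) (Fin n → Bool) ℂ :=
  Matrix.of fun z z' => if z' = Function.update z i (!(z i)) then 1 else 0

theorem NormedSpace.exp_smul_of_mul_self_eq_one {𝔸 : Type*} [Ring 𝔸] [Algebra ℂ 𝔸]
    [TopologicalSpace 𝔸] [IsTopologicalRing 𝔸] [ContinuousSMul ℂ 𝔸] [T2Space 𝔸]
    {a : 𝔸} (ha : a * a = 1) (θ : ℂ) :
    NormedSpace.exp (θ • a) = Complex.cosh θ • 1 + Complex.sinh θ • a := by
  have h_even (k : ℕ) : a ^ (2 * k) = 1 := by rw [pow_mul, sq, ha, one_pow]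
  rw [NormedSpace.exp_eq_tsum ℂ]
  refine HasSum.tsum_eq (HasSum.even_add_odd ?_ ?_)
  · convert (Complex.hasSum_cosh θ).smul_const (1 : 𝔸) using 2 with k
    rw [smul_pow, h_even, smul_smul, div_eq_inv_mul]
  · convert (Complex.hasSum_sinh θ).smul_const a using 2 with k
    rw [smul_pow, pow_succ a, h_even, one_mul, smul_smul, div_eq_inv_mul]

namespace Matrix

variable {ι R : Type*} [Fintype ι] [CommSemiring R] {α : ι → Type*}

/-- The matrix of `⨂ i, A i` in the product basis. -/
def piKronecker (A : ∀ i, Matrix (α i) (α i) R) : Matrix (∀ i, α i) (∀ i, α i) R :=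
  of fun z z' => ∏ i, A i (z i) (z' i)

@[simp]
theorem piKronecker_apply (A : ∀ i, Matrix (α i) (α i) R) (z z' : ∀ i, α i) :
    piKronecker A z z' = ∏ i, A i (z i) (z' i) := rfl

section Mul

variable [DecidableEq ι] [∀ i, Fintype (α i)]

theorem piKronecker_mul (A B : ∀ i, Matrix (α i) (α i) R) :
    piKronecker A * piKronecker B = piKronecker (A * B) := by
  ext z z'
  simp only [mul_apply, piKronecker_apply, Pi.mul_apply, Finset.prod_univ_sum,
    Fintype.piFinset_univ, Finset.prod_mul_distrib]

theorem _root_.Commute.piKronecker {A B : ∀ i, Matrix (α i) (α i) R} (h : Commute A B) :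
    Commute (piKronecker A) (piKronecker B) := by
  rw [Commute, SemiconjBy, piKronecker_mul, piKronecker_mul, h.eq]

end Mul

variable [∀ i, DecidableEq (α i)]

theorem piKronecker_one : piKronecker (1 : ∀ i, Matrix (α i) (α i) R) = 1 := by
  ext z z'
  simp only [piKronecker_apply, Pi.one_apply, one_apply, Finset.prod_boole, Finset.mem_univ,
    true_imp_iff, funext_iff]

variable [DecidableEq ι]

theorem piKronecker_mulSingle_apply (i : ι) (A : Matrix (α i) (α i) R) (z z' : ∀ i, α i) :
    piKronecker (Pi.mulSingle i A) z z' =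
      A (z i) (z' i) * ∏ j ∈ Finset.univ.erase i, (1 : Matrix (α j) (α j) R) (z j) (z' j) := by
  rw [piKronecker_apply, ← Finset.mul_prod_erase _ _ (Finset.mem_univ i), Pi.mulSingle_eq_same]
  congr 1
  refine Finset.prod_congr rfl fun j hj => ?_
  rw [Pi.mulSingle_eq_of_ne (Finset.ne_of_mem_erase hj)]

theorem piKronecker_mulSingle_add (i : ι) (A B : Matrix (α i) (α i) R) :
    piKronecker (Pi.mulSingle i (A + B)) =
      piKronecker (Pi.mulSingle i A) + piKronecker (Pi.mulSingle i B) := by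
  ext z z'
  simp only [piKronecker_mulSingle_apply, add_apply, add_mul]

theorem piKronecker_mulSingle_smul (i : ι) (c : R) (A : Matrix (α i) (α i) R) :
    piKronecker (Pi.mulSingle i (c • A)) = c • piKronecker (Pi.mulSingle i A) := by
  ext z z'
  simp only [piKronecker_mulSingle_apply, smul_apply, smul_eq_mul, mul_assoc]

end Matrix

def bitFlip (R : Type*) [Zero R] [One R] : Matrix Bool Bool R :=
  of fun b b' => if b' = !b then 1 else 0

theorem bitFlip_mul_self (R : Type*) [Semiring R] : bitFlip R * bitFlip R = 1 := by
  ext b b'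
  cases b <;> cases b' <;> simp [bitFlip, mul_apply]

theorem pauliX_eq_piKronecker {n : ℕ} (i : Fin n) :
    pauliX n i = piKronecker (Pi.mulSingle i (bitFlip ℂ)) := by
  ext z z'
  have hentry (j : Fin n) :
      (Pi.mulSingle i (bitFlip ℂ) : Fin n → Matrix Bool Bool ℂ) j (z j) (z' j) =
      if z' j = Function.update z i (!z i) j then 1 else 0 := by
    rcases eq_or_ne j i with rfl | hji
    · simp [bitFlip]
    · simp [hji, one_apply, eq_comm]
  simp only [pauliX, of_apply, piKronecker_apply, hentry, Finset.prod_boole, Finset.mem_univ,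
    true_imp_iff, funext_iff]

theorem pauliX_mul_self {n : ℕ} (i : Fin n) : pauliX n i * pauliX n i = 1 := by
  rw [pauliX_eq_piKronecker, piKronecker_mul, ← Pi.mulSingle_mul, bitFlip_mul_self,
    Pi.mulSingle_one, piKronecker_one]

theorem pauliX_commute {n : ℕ} (i j : Fin n) : Commute (pauliX n i) (pauliX n j) := by
  rw [pauliX_eq_piKronecker, pauliX_eq_piKronecker]
  exact (Pi.mulSingle_apply_commute (fun _ => bitFlip ℂ) i j).piKronecker

noncomputable def bitRotation (θ : ℂ) : Matrix Bool Bool ℂ :=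
  Complex.cosh θ • 1 + Complex.sinh θ • bitFlip ℂ

theorem bitRotation_apply (θ : ℂ) (b b' : Bool) :
    bitRotation θ b b' = if b = b' then Complex.cosh θ else Complex.sinh θ := by
  cases b <;> cases b' <;> simp [bitRotation, bitFlip]

theorem exp_smul_pauliX {n : ℕ} (θ : ℂ) (i : Fin n) :
    NormedSpace.exp (θ • pauliX n i) = piKronecker (Pi.mulSingle i (bitRotation θ)) := by
  rw [NormedSpace.exp_smul_of_mul_self_eq_one (pauliX_mul_self i), bitRotation,
    piKronecker_mulSingle_add, piKronecker_mulSingle_smul, piKronecker_mulSingle_smul,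
    Pi.mulSingle_one, piKronecker_one, pauliX_eq_piKronecker]

theorem exp_smul_sum_pauliX {n : ℕ} (θ : ℂ) (s : Finset (Fin n)) :
    NormedSpace.exp (θ • ∑ i ∈ s, pauliX n i) =
      piKronecker (s.piecewise (fun _ => bitRotation θ) 1) := by
  induction s using Finset.induction with
  | empty => simp [piKronecker_one]
  | @insert j s hj ih =>
    have hcomm : Commute (θ • pauliX n j) (θ • ∑ i ∈ s, pauliX n i) :=
      ((Commute.sum_right s _ _ fun i _ => pauliX_commute j i).smul_left _).smul_right _
    have hpiece : Pi.mulSingle j (bitRotation θ) * s.piecewise (fun _ => bitRotation θ) 1 =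
        (insert j s).piecewise (fun _ => bitRotation θ) 1 := by
      ext1 k
      rcases eq_or_ne k j with rfl | hkj
      · simp [hj]
      · simp [hkj, Finset.piecewise_insert_of_ne]
    rw [Finset.sum_insert hj, smul_add, Matrix.exp_add_of_commute _ _ hcomm, exp_smul_pauliX, ih,
      piKronecker_mul, hpiece]

open Finset in
theorem prod_ite_eq_pow_mul_pow_hammingDist {ι M : Type*} [Fintype ι] [CommMonoid M]
    {β : ι → Type*} [∀ i, DecidableEq (β i)] (x y : ∀ i, β i) (a b : M) :
    ∏ i, (if x i = y i then a else b) =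
      a ^ (Fintype.card ι - hammingDist x y) * b ^ hammingDist x y := by
  have hagree : #{i | x i = y i} = Fintype.card ι - hammingDist x y := by
    have hsplit := Finset.card_filter_add_card_filter_not (s := .univ) (fun i => x i = y i)
    rw [Finset.card_univ] at hsplit
    simp only [hammingDist, ne_eq]
    omega
  rw [Finset.prod_ite, Finset.prod_const, Finset.prod_const, hagree]
  rfl

/-- The mixing unitary `e^{iβ ∑ᵢ Xᵢ}` factorizes into single-qubit rotations:
its entries are `(cos β)^(n-d) (i sin β)^d` where `d` is the Hamming
distance between the two bitstrings. -/
theorem exp_mixer_entries (n : ℕ) (β : ℝ)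
    (B' : Matrix (Fin n → Bool) (Fin n → Bool) ℂ)
    (hB' : B' = ∑ i, pauliX n i)
    (z z' : Fin n → Bool) :
    NormedSpace.exp ((Complex.I * (β : ℂ)) • B') z z' =
      (Real.cos β : ℂ) ^ (n - hammingDist z z') *
        (Complex.I * (Real.sin β : ℂ)) ^ (hammingDist z z') := by
  subst hB'
  rw [exp_smul_sum_pauliX, Finset.piecewise_univ, piKronecker_apply]
  simp only [bitRotation_apply]
  rw [prod_ite_eq_pow_mul_pow_hammingDist, Fintype.card_fin, mul_comm I, Complex.cosh_mul_I,
    Complex.sinh_mul_I, Complex.ofReal_cos, Complex.ofReal_sin, mul_comm _ I]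
end

section
/- Fix n : ℕ with n ≥ 1 and γ : ℝ. Work with complex matrices indexed by bitstrings z : Fin n → Bool; let B' = ∑ i, X_i be the mixer sum, let R be the diagonal matrix with R z z = |z| (the Hamming weight of z, as a complex number), and let u be the uniform vector with u z = 2^(-(n:ℝ)/2). Let ψ_f = (Matrix.exp (I·(π/4)·B') * Matrix.exp (-I·γ·R)).mulVec u. Then for every z : Fin n → Bool, ψ_f z = ∏ i, a (z i), where a false = (1 + I·exp(-I·γ))/2 and a true = (I + exp(-I·γ))/2. -/
/-!
The cost unitary `exp (-iγR)` is diagonal with entry `∏ᵢ e^{-iγ zᵢ}` at `z`, so it keeps the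
uniform state `|+⟩^{⊗n}` a product state. The flips `Xᵢ` commute and square to `1`, so
`exp (c • ∑ᵢ Xᵢ) = ∏ᵢ (cosh c + sinh c • Xᵢ)`, and each factor only changes the `i`-th tensor
factor of a product state. At `c = iπ/4` it sends the amplitudes `φ` of one qubit to
`b ↦ (φ b + i φ (¬b)) / √2`.
-/

open Matrix Complex

/-- The Hamming weight of a bitstring: the number of `true` bits. -/
def hammingWeight {n : ℕ} (z : Fin n → Bool) : ℕ :=
  (Finset.univ.filter fun i => z i = true).card

theorem NormedSpace.exp_smul_of_sq_eq_one {A : Type*} [Ring A] [Algebra ℂ A] [TopologicalSpace A]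
    [IsTopologicalRing A] [ContinuousSMul ℂ A] [T2Space A]
    {x : A} (hx : x ^ 2 = 1) (c : ℂ) :
    NormedSpace.exp (c • x) = cosh c • (1 : A) + sinh c • x := by
  rw [NormedSpace.exp_eq_tsum ℂ]
  refine HasSum.tsum_eq (HasSum.even_add_odd ?_ ?_)
  · convert (hasSum_cosh c).smul_const (1 : A) using 2 with k
    rw [smul_pow, pow_mul x 2 k, hx, one_pow, smul_smul, div_eq_inv_mul]
  · convert (hasSum_sinh c).smul_const x using 2 with k
    rw [smul_pow, pow_succ x, pow_mul x 2 k, hx, one_pow, one_mul, smul_smul, div_eq_inv_mul]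

section Pauli

variable {n : ℕ}

theorem pauliX_mul_apply (i : Fin n) (M : Matrix (Fin n → Bool) (Fin n → Bool) ℂ)
    (z z' : Fin n → Bool) : (pauliX n i * M) z z' = M (Function.update z i (!z i)) z' := by
  simp [pauliX, mul_apply, ite_mul]

theorem pauliX_mulVec_apply (i : Fin n) (v : (Fin n → Bool) → ℂ) (z : Fin n → Bool) :
    (pauliX n i *ᵥ v) z = v (Function.update z i (!z i)) := by
  simp [pauliX, mulVec, dotProduct, ite_mul]

theorem pauliX_sq (i : Fin n) : pauliX n i ^ 2 = 1 := by
  ext z z'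
  rw [sq, pauliX_mul_apply]
  simp [pauliX, one_apply, eq_comm]

theorem commute_pauliX (i j : Fin n) : Commute (pauliX n i) (pauliX n j) := by
  rcases eq_or_ne i j with rfl | hij
  · exact Commute.refl _
  refine Matrix.ext fun z z' => ?_
  rw [pauliX_mul_apply, pauliX_mul_apply]
  simp only [pauliX, of_apply, Function.update_of_ne hij.symm, Function.update_of_ne hij,
    Function.update_comm hij]

end Pauli

section ProductState

variable {ι α : Type*} [Fintype ι]

def productState (f : ι → α → ℂ) : (ι → α) → ℂ := fun z => ∏ i, f i (z i)

theorem productState_update_apply [DecidableEq ι] (f : ι → α → ℂ) (a : ι) (φ : α → ℂ)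
    (z : ι → α) :
    productState (Function.update f a φ) z = φ (z a) * ∏ i ∈ Finset.univ \ {a}, f i (z i) := by
  rw [← Finset.prod_update_of_mem (Finset.mem_univ a)]
  refine Finset.prod_congr rfl fun i _ => ?_
  rcases eq_or_ne i a with rfl | hia <;> simp [*]

theorem productState_apply_update [DecidableEq ι] (f : ι → α → ℂ) (a : ι) (x : α)
    (z : ι → α) :
    productState f (Function.update z a x) =
      productState (Function.update f a fun _ => f a x) z := by
  refine Finset.prod_congr rfl fun i _ => ?_
  rcases eq_or_ne i a with rfl | hia <;> simp [*]

theorem diagonal_productState_mulVec [Fintype α] [DecidableEq α] [DecidableEq ι]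
    (f g : ι → α → ℂ) :
    diagonal (productState g) *ᵥ productState f = productState (g * f) := by
  ext z
  simp [mulVec_diagonal, productState, Finset.prod_mul_distrib]

end ProductState

section Mixer

variable {n : ℕ}

-- The single-qubit gate `exp (c • X)` acting on the amplitudes of one qubit.
noncomputable def rotX (c : ℂ) (φ : Bool → ℂ) : Bool → ℂ :=
  fun b => cosh c * φ b + sinh c * φ (!b)

theorem exp_smul_pauliX_s4 (c : ℂ) (i : Fin n) :
    NormedSpace.exp (c • pauliX n i) = cosh c • 1 + sinh c • pauliX n i :=
  NormedSpace.exp_smul_of_sq_eq_one (pauliX_sq i) c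

theorem exp_smul_pauliX_mulVec_productState (c : ℂ) (a : Fin n) (f : Fin n → Bool → ℂ) :
    NormedSpace.exp (c • pauliX n a) *ᵥ productState f
      = productState (Function.update f a (rotX c (f a))) := by
  ext z
  have hz : productState f z = productState (Function.update f a (f a)) z := by
    rw [Function.update_eq_self]
  rw [exp_smul_pauliX_s4, add_mulVec, smul_mulVec, smul_mulVec, one_mulVec, Pi.add_apply,
    Pi.smul_apply, Pi.smul_apply, pauliX_mulVec_apply, productState_apply_update, hz,
    productState_update_apply, productState_update_apply, productState_update_apply, rotX]
  simp only [smul_eq_mul]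
  ring

theorem exp_smul_sum_pauliX_mulVec_productState (c : ℂ) (s : Finset (Fin n))
    (f : Fin n → Bool → ℂ) :
    NormedSpace.exp (c • ∑ i ∈ s, pauliX n i) *ᵥ productState f
      = productState (s.piecewise (fun i => rotX c (f i)) f) := by
  induction s using Finset.induction_on with
  | empty => simp
  | insert a s ha ih =>
    have hcomm : Commute (c • pauliX n a) (c • ∑ i ∈ s, pauliX n i) :=
      ((Commute.sum_right _ _ _ fun i _ => commute_pauliX a i).smul_left c).smul_right c
    rw [Finset.sum_insert ha, smul_add, Matrix.exp_add_of_commute _ _ hcomm, ← mulVec_mulVec,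
      ih, exp_smul_pauliX_mulVec_productState, Finset.piecewise_insert,
      Finset.piecewise_eq_of_notMem _ _ _ ha]

end Mixer

section Cost

variable {n : ℕ}

theorem exp_mul_hammingWeight (c : ℂ) (z : Fin n → Bool) :
    exp (c * hammingWeight z) = ∏ i, if z i then exp c else 1 := by
  rw [← Finset.prod_filter, Finset.prod_const, ← exp_nat_mul, mul_comm]
  rfl

theorem exp_smul_diagonal_hammingWeight (c : ℂ) :
    NormedSpace.exp (c • diagonal fun z : Fin n → Bool => (hammingWeight z : ℂ))
      = diagonal (productState fun _ b => if b then exp c else 1) := by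
  rw [← diagonal_smul, Matrix.exp_diagonal]
  congr 1
  ext z
  rw [Pi.coe_exp, ← exp_eq_exp_ℂ, Pi.smul_apply, smul_eq_mul, exp_mul_hammingWeight]
  rfl

end Cost

theorem ofReal_two_rpow_neg_natCast_div_two (n : ℕ) :
    (((2 : ℝ) ^ (-(n : ℝ) / 2) : ℝ) : ℂ) = ((√2 : ℝ) : ℂ)⁻¹ ^ n := by
  rw [show -(n : ℝ) / 2 = 1 / 2 * -(n : ℝ) by ring, Real.rpow_mul zero_le_two,
    Real.rpow_neg (by positivity), Real.rpow_natCast, ← Real.sqrt_eq_rpow, inv_pow]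
  push_cast
  rfl

theorem rotX_I_mul_pi_div_four (φ : Bool → ℂ) (b : Bool) :
    rotX (I * ((Real.pi : ℂ) / 4)) (fun b => φ b * ((√2 : ℝ) : ℂ)⁻¹) b =
      (φ b + I * φ (!b)) / 2 := by
  have hcosh : cosh (I * ((Real.pi : ℂ) / 4)) = ((√2 : ℝ) : ℂ) / 2 := by
    rw [mul_comm, cosh_mul_I, ← ofReal_ofNat, ← ofReal_div, ← ofReal_cos, Real.cos_pi_div_four,
      ofReal_div, ofReal_ofNat]
  have hsinh : sinh (I * ((Real.pi : ℂ) / 4)) = ((√2 : ℝ) : ℂ) / 2 * I := by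
    rw [mul_comm, sinh_mul_I, ← ofReal_ofNat, ← ofReal_div, ← ofReal_sin, Real.sin_pi_div_four,
      ofReal_div, ofReal_ofNat]
  rw [rotX, hcosh, hsinh]
  field_simp

theorem qaoa1_ramp_product_state_general (n : ℕ) (γ : ℝ)
    (B' R : Matrix (Fin n → Bool) (Fin n → Bool) ℂ)
    (hB' : B' = ∑ i, pauliX n i)
    (hR : R = Matrix.diagonal fun z => (hammingWeight z : ℂ))
    (u : (Fin n → Bool) → ℂ)
    (hu : u = fun _ => (((2 : ℝ) ^ (-(n : ℝ) / 2) : ℝ) : ℂ))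
    (ψf : (Fin n → Bool) → ℂ)
    (hψf : ψf = (NormedSpace.exp ((Complex.I * ((Real.pi : ℂ) / 4)) • B') *
        NormedSpace.exp ((-Complex.I * (γ : ℂ)) • R)).mulVec u)
    (a : Bool → ℂ)
    (ha_false : a false = (1 + Complex.I * Complex.exp (-Complex.I * γ)) / 2)
    (ha_true : a true = (Complex.I + Complex.exp (-Complex.I * γ)) / 2) :
    ∀ z : Fin n → Bool, ψf z = ∏ i, a (z i) := by
  have hu_product : u = productState fun (_ : Fin n) (_ : Bool) => ((√2 : ℝ) : ℂ)⁻¹ := by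
    ext z
    simp [hu, productState, ofReal_two_rpow_neg_natCast_div_two]
  intro z
  rw [hψf, ← mulVec_mulVec, hR, exp_smul_diagonal_hammingWeight, hu_product,
    diagonal_productState_mulVec, hB', exp_smul_sum_pauliX_mulVec_productState,
    Finset.piecewise_univ]
  refine Finset.prod_congr rfl fun i _ => ?_
  refine (rotX_I_mul_pi_div_four (fun b => if b then exp (-I * γ) else 1) (z i)).trans ?_
  cases z i
  · simp [ha_false]
  · simp [ha_true, add_comm]

/-- The QAOA1 output state on the pure Hamming ramp is an exact product state,
with explicit single-qubit amplitudes. -/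
theorem qaoa1_ramp_product_state (n : ℕ) (hn : 1 ≤ n) (γ : ℝ)
    (B' R : Matrix (Fin n → Bool) (Fin n → Bool) ℂ)
    (hB' : B' = ∑ i, pauliX n i)
    (hR : R = Matrix.diagonal fun z => (hammingWeight z : ℂ))
    (u : (Fin n → Bool) → ℂ)
    (hu : u = fun _ => (((2 : ℝ) ^ (-(n : ℝ) / 2) : ℝ) : ℂ))
    (ψf : (Fin n → Bool) → ℂ)
    (hψf : ψf = (NormedSpace.exp ((Complex.I * ((Real.pi : ℂ) / 4)) • B') *
        NormedSpace.exp ((-Complex.I * (γ : ℂ)) • R)).mulVec u)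
    (a : Bool → ℂ)
    (ha_false : a false = (1 + Complex.I * Complex.exp (-Complex.I * γ)) / 2)
    (ha_true : a true = (Complex.I + Complex.exp (-Complex.I * γ)) / 2) :
    ∀ z : Fin n → Bool, ψf z = ∏ i, a (z i) :=
  qaoa1_ramp_product_state_general n γ B' R hB' hR u hu ψf hψf a ha_false ha_true
end

section
/- Let δ be a real number with 0 < δ, and let n ≥ 1 be a natural number with (n:ℝ)·δ ≤ 1. Then ∑_{w ∈ Finset.Icc 1 n} ((w:ℝ)·δ) / (1 - Real.exp (-(w:ℝ)·δ))² ≤ (4/δ) · (1 + Real.log n). -/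
/-- Key estimate for bang-bang simulated annealing on the Bush instance: for
step size `δ` with `n·δ ≤ 1`, the expected number of Monte-Carlo moves down
the Hamming ramp satisfies
`∑_{w=1}^n (wδ)/(1 − e^{−wδ})² ≤ (4/δ)(1 + log n)`. -/
theorem bbsa_bush_move_sum_bound (δ : ℝ) (hδ : 0 < δ) (n : ℕ) (hn : 1 ≤ n)
    (hnδ : (n : ℝ) * δ ≤ 1) :
    ∑ w ∈ Finset.Icc 1 n,
        ((w : ℝ) * δ) / (1 - Real.exp (-((w : ℝ) * δ))) ^ 2 ≤
      (4 / δ) * (1 + Real.log n) := by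
  have key : ∀ w ∈ Finset.Icc 1 n,
      ((w : ℝ) * δ) / (1 - Real.exp (-((w : ℝ) * δ))) ^ 2 ≤ 4 / ((w : ℝ) * δ) := by
    intro w hw
    simp only [Finset.mem_Icc] at hw
    set x : ℝ := (w : ℝ) * δ with hx
    have hw1 : (1 : ℝ) ≤ (w : ℝ) := by exact_mod_cast hw.1
    have hxpos : 0 < x := mul_pos (by linarith) hδ
    have hxle : x ≤ 1 := by
      have : (w : ℝ) * δ ≤ (n : ℝ) * δ := by
        have : (w : ℝ) ≤ (n : ℝ) := by exact_mod_cast hw.2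
        nlinarith
      linarith
    -- 1 - e^{-x} ≥ x/2
    have hexp : Real.exp (-x) ≤ 1 / (1 + x) := by
      rw [le_div_iff₀ (by linarith)]
      calc Real.exp (-x) * (1 + x) ≤ Real.exp (-x) * Real.exp x := by
            apply mul_le_mul_of_nonneg_left _ (Real.exp_nonneg _)
            linarith [Real.add_one_le_exp x]
        _ = 1 := by rw [← Real.exp_add]; simp
    have hlow : x / 2 ≤ 1 - Real.exp (-x) := by
      have : 1 / (1 + x) ≤ 1 - x / 2 := by
        rw [div_le_iff₀ (by linarith)]
        nlinarith
      linarith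
    have hden : (x / 2) ^ 2 ≤ (1 - Real.exp (-x)) ^ 2 := by
      apply sq_le_sq' <;> nlinarith
    calc x / (1 - Real.exp (-x)) ^ 2 ≤ x / (x / 2) ^ 2 := by
          apply div_le_div_of_nonneg_left hxpos.le _ hden
          positivity
      _ = 4 / x := by field_simp; ring
  calc ∑ w ∈ Finset.Icc 1 n, ((w : ℝ) * δ) / (1 - Real.exp (-((w : ℝ) * δ))) ^ 2
      ≤ ∑ w ∈ Finset.Icc 1 n, 4 / ((w : ℝ) * δ) := Finset.sum_le_sum key
    _ = (4 / δ) * ∑ w ∈ Finset.Icc 1 n, ((w : ℝ))⁻¹ := by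
        rw [Finset.mul_sum]; congr 1; ext w; field_simp
    _ ≤ (4 / δ) * (1 + Real.log n) := by
        apply mul_le_mul_of_nonneg_left _ (by positivity)
        have := harmonic_le_one_add_log n
        rw [harmonic_eq_sum_Icc] at this
        calc ∑ w ∈ Finset.Icc 1 n, ((w : ℝ))⁻¹
            = ((∑ w ∈ Finset.Icc 1 n, (w : ℚ)⁻¹ : ℚ) : ℝ) := by push_cast; rfl
          _ ≤ 1 + Real.log n := this
end
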